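/- arXiv:2512.06545 — 3 statements merged into one kernel-verified Lean document; each statement's English description precedes it below -/
import Mathlib

section
/- There exist permutations σ₁, σ₂, σ₃ of {1, …, 28} such that σ₁ ∘ σ₂ ∘ σ₃ = id, the subgroup generated by σ₁, σ₂, σ₃ acts transitively on {1, …, 28}, and the multisets of orbit sizes of the cyclic groups generated by σ₁, σ₂, σ₃ are, respectively, {7,5,3,2,2,2,1,1,1,1,1,1,1}, {6,6,4,3,3,2,2,1,1}, and {18,4,4,2}. -/
/-- The number of orbits of the cyclic group generated by a permutation `σ`
(i.e., the number of cycles of `σ`, counting fixed points as cycles of length 1). -/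
noncomputable def cycleCount {α : Type*} [Finite α] (σ : Equiv.Perm α) : ℕ :=
  Nat.card (MulAction.orbitRel.Quotient (Subgroup.zpowers σ) α)

/-- The multiset of sizes of the orbits of the cyclic group generated by a permutation `σ`
(i.e., the cycle type of `σ`, with fixed points contributing parts equal to 1). -/
noncomputable def orbitSizes {α : Type*} [Finite α] (σ : Equiv.Perm α) : Multiset ℕ :=
  letI := Fintype.ofFinite (MulAction.orbitRel.Quotient (Subgroup.zpowers σ) α)
  (Finset.univ : Finset (MulAction.orbitRel.Quotient (Subgroup.zpowers σ) α)).val.map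
    fun q => Nat.card q.orbit

/-!
The orbits of `⟨σ⟩` are the supports of the cycles of `σ` together with the singletons of its
fixed points, so `orbitSizes σ` is the partition `σ.partition` of `Fintype.card α` attached to
the cycle type of `σ`. For an explicit triple, the product and the three cycle types are finite
computations, checked by evaluation in the kernel. Transitivity holds because `⟨σ₁, σ₂⟩`
contains the `28`-cycle `σ₁ ^ 3 * σ₂ ^ 2 * σ₁ * σ₂`.
-/

open Equiv Perm MulAction Finset

namespace Equiv.Perm

variable {α : Type*} (σ : Perm α)

theorem mem_orbit_zpowers_iff_sameCycle {x y : α} :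
    y ∈ orbit (Subgroup.zpowers σ) x ↔ σ.SameCycle x y := by
  constructor
  · rintro ⟨⟨_, k, rfl⟩, rfl⟩
    exact ⟨k, rfl⟩
  · rintro ⟨k, rfl⟩
    exact ⟨⟨σ ^ k, k, rfl⟩, rfl⟩

theorem mk_eq_mk_iff_sameCycle {x y : α} :
    (Quotient.mk'' x : orbitRel.Quotient (Subgroup.zpowers σ) α) = Quotient.mk'' y ↔
      σ.SameCycle x y := by
  rw [Quotient.eq'', orbitRel_apply, mem_orbit_zpowers_iff_sameCycle, sameCycle_comm]

theorem sameCycle_out_mk (x : α) :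
    σ.SameCycle (Quotient.mk'' x : orbitRel.Quotient (Subgroup.zpowers σ) α).out x :=
  (mk_eq_mk_iff_sameCycle σ).mp (Quotient.out_eq' _)

theorem orbitSizes_eq_map_univ [Finite α] [Fintype (orbitRel.Quotient (Subgroup.zpowers σ) α)] :
    orbitSizes σ = (univ : Finset (orbitRel.Quotient (Subgroup.zpowers σ) α)).val.map
      fun q => Nat.card q.orbit := by
  unfold orbitSizes
  congr!

theorem card_orbit_quotient_eq (q : orbitRel.Quotient (Subgroup.zpowers σ) α) :
    Nat.card q.orbit = Nat.card (orbit (Subgroup.zpowers σ) q.out) := by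
  rw [orbitRel.Quotient.orbit_eq_orbit_out q Quotient.out_eq']

section Fintype

variable [Fintype α] [DecidableEq α]

theorem orbit_zpowers_eq_support_cycleOf {x : α} (hx : x ∈ σ.support) :
    orbit (Subgroup.zpowers σ) x = (σ.cycleOf x).support := by
  ext y
  rw [mem_orbit_zpowers_iff_sameCycle, mem_coe, mem_support_cycleOf_iff, and_iff_left hx]

theorem orbit_zpowers_eq_singleton {x : α} (hx : x ∉ σ.support) :
    orbit (Subgroup.zpowers σ) x = {x} := by
  ext y
  rw [mem_orbit_zpowers_iff_sameCycle, Set.mem_singleton_iff]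
  exact ⟨fun h => (h.eq_of_left (notMem_support.mp hx)).symm, fun h => h ▸ .refl σ x⟩

theorem card_orbit_zpowers_of_mem_support {x : α} (hx : x ∈ σ.support) :
    Nat.card (orbit (Subgroup.zpowers σ) x) = #(σ.cycleOf x).support := by
  rw [orbit_zpowers_eq_support_cycleOf σ hx, Nat.card_coe_set_eq, Set.ncard_coe_finset]

theorem card_orbit_zpowers_of_notMem_support {x : α} (hx : x ∉ σ.support) :
    Nat.card (orbit (Subgroup.zpowers σ) x) = 1 := by
  rw [orbit_zpowers_eq_singleton σ hx, Nat.card_unique]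

/-- Each orbit meeting the support is the support of a cycle factor, namely `σ.cycleOf` of any of
its points. -/
theorem map_card_orbit_filter_out_mem_support
    [Fintype (orbitRel.Quotient (Subgroup.zpowers σ) α)] :
    (univ.filter fun q : orbitRel.Quotient (Subgroup.zpowers σ) α =>
      q.out ∈ σ.support).val.map (fun q => Nat.card q.orbit) = σ.cycleType := by
  refine Multiset.map_eq_map_of_bij_of_nodup _ _ (univ.filter _).nodup
    (cycleFactorsFinset σ).nodup (fun q _ => σ.cycleOf q.out) ?_ ?_ ?_ ?_
  · intro q hq
    exact cycleOf_mem_cycleFactorsFinset_iff.mpr (mem_filter.mp hq).2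
  · intro q₁ _ q₂ hq₂ h
    have hq₂_mem : q₂.out ∈ (σ.cycleOf q₁.out).support :=
      h ▸ mem_support_cycleOf_iff.mpr ⟨.refl _ _, (mem_filter.mp hq₂).2⟩
    rw [← Quotient.out_eq' q₁, ← Quotient.out_eq' q₂]
    exact (mk_eq_mk_iff_sameCycle σ).mpr (mem_support_cycleOf_iff.mp hq₂_mem).1
  · intro c hc
    obtain ⟨a, ha⟩ := (mem_cycleFactorsFinset_iff.mp hc).1.nonempty_support
    have ha_support : a ∈ σ.support := mem_cycleFactorsFinset_support_le hc ha
    refine ⟨Quotient.mk'' a, mem_filter.mpr ⟨mem_univ _, ?_⟩, ?_⟩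
    · exact (sameCycle_out_mk σ a).mem_support_iff.mpr ha_support
    · rw [(sameCycle_out_mk σ a).cycleOf_eq, ← cycle_is_cycleOf ha hc]
  · intro q hq
    rw [card_orbit_quotient_eq, card_orbit_zpowers_of_mem_support σ (mem_filter.mp hq).2]
    rfl

theorem map_card_orbit_filter_out_notMem_support
    [Fintype (orbitRel.Quotient (Subgroup.zpowers σ) α)] :
    (univ.filter fun q : orbitRel.Quotient (Subgroup.zpowers σ) α =>
      q.out ∉ σ.support).val.map (fun q => Nat.card q.orbit) =
      Multiset.replicate (Fintype.card α - #σ.support) 1 := by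
  have card_orbit_eq_one (q : orbitRel.Quotient (Subgroup.zpowers σ) α)
      (hq : q ∈ (univ.filter fun q => q.out ∉ σ.support).val) : Nat.card q.orbit = 1 := by
    rw [card_orbit_quotient_eq, card_orbit_zpowers_of_notMem_support σ (mem_filter.mp hq).2]
  rw [Multiset.map_congr rfl card_orbit_eq_one, Multiset.map_const', card_val, ← card_compl]
  congr 1
  refine card_nbij' (fun q => q.out) Quotient.mk'' ?_ ?_ ?_ ?_
  · intro q hq
    simpa using hq
  · intro x hx
    rw [mem_coe, mem_compl] at hx
    rw [mem_coe, mem_filter]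
    exact ⟨mem_univ _, fun h => hx ((sameCycle_out_mk σ x).mem_support_iff.mp h)⟩
  · intro q _
    exact Quotient.out_eq' q
  · intro x hx
    exact (sameCycle_out_mk σ x).eq_of_right (notMem_support.mp (mem_compl.mp hx))

theorem orbitSizes_eq_parts_partition : orbitSizes σ = σ.partition.parts := by
  classical
  rw [orbitSizes_eq_map_univ, parts_partition,
    ← Multiset.filter_add_not (fun q => q.out ∈ σ.support) univ.val, Multiset.map_add]
  exact congrArg₂ (· + ·) (map_card_orbit_filter_out_mem_support σ)
    (map_card_orbit_filter_out_notMem_support σ)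

theorem exists_mem_apply_eq_of_cycleType_eq_card {H : Subgroup (Perm α)} {g : Perm α}
    (hg : g ∈ H) (hcycle : g.cycleType = {Fintype.card α}) (x y : α) :
    ∃ h ∈ H, h x = y := by
  have hg_cycle : g.IsCycle := card_cycleType_eq_one.mp (by rw [hcycle]; rfl)
  have hsupport : g.support = univ :=
    eq_univ_of_card _ (by rw [← sum_cycleType, hcycle, Multiset.sum_singleton])
  have moves (z : α) : g z ≠ z := mem_support.mp (hsupport ▸ mem_univ z)
  obtain ⟨k, hk⟩ := hg_cycle.exists_pow_eq (moves x) (moves y)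
  exact ⟨g ^ k, pow_mem hg k, hk⟩

end Fintype

end Equiv.Perm

namespace BranchData28

def σ₁ : Perm (Fin 28) :=
  c[0, 15, 6, 27, 18, 26, 4] * c[1, 20, 21, 25, 13] * c[7, 9, 19] * c[2, 14] * c[5, 23] *
    c[16, 17]

def σ₂ : Perm (Fin 28) :=
  c[5, 15, 25, 27, 16, 6] * c[8, 18, 20, 14, 24, 23] * c[2, 12, 3, 22] * c[4, 11, 7] *
    c[9, 19, 17] * c[0, 13] * c[10, 21]

def σ₃ : Perm (Fin 28) :=
  c[0, 7, 9, 11, 4, 26, 8, 23, 6, 5, 24, 14, 22, 3, 12, 2, 20, 1] * c[10, 21, 18, 25] *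
    c[16, 19, 17, 27] * c[13, 15]

theorem σ₁_mul_σ₂_mul_σ₃ : σ₁ * σ₂ * σ₃ = 1 := by
  decide +kernel

def fullCycle : Perm (Fin 28) := σ₁ ^ 3 * σ₂ ^ 2 * σ₁ * σ₂

theorem fullCycle_mem_closure :
    fullCycle ∈ Subgroup.closure ({σ₁, σ₂, σ₃} : Set (Perm (Fin 28))) :=
  have mem₁ : σ₁ ∈ Subgroup.closure ({σ₁, σ₂, σ₃} : Set (Perm (Fin 28))) :=
    Subgroup.subset_closure (by simp)
  have mem₂ : σ₂ ∈ Subgroup.closure ({σ₁, σ₂, σ₃} : Set (Perm (Fin 28))) :=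
    Subgroup.subset_closure (by simp)
  mul_mem (mul_mem (mul_mem (pow_mem mem₁ 3) (pow_mem mem₂ 2)) mem₁) mem₂

theorem cycleType_fullCycle : fullCycle.cycleType = {28} := by
  decide +kernel

theorem parts_partition_σ₁ :
    σ₁.partition.parts = {7, 5, 3, 2, 2, 2, 1, 1, 1, 1, 1, 1, 1} := by
  decide +kernel

theorem parts_partition_σ₂ : σ₂.partition.parts = {6, 6, 4, 3, 3, 2, 2, 1, 1} := by
  decide +kernel

theorem parts_partition_σ₃ : σ₃.partition.parts = {18, 4, 4, 2} := by
  decide +kernel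

end BranchData28

/-- Realizability of the degree-28 branch-data triple
`[7, 5, 3, 2, 2, 2, 1, 1, 1, 1, 1, 1, 1]`, `[6, 6, 4, 3, 3, 2, 2, 1, 1]`, `[18, 4, 4, 2]`
by a transitive permutation triple with product the identity. -/
theorem realizable_triple_12 :
    ∃ σ₁ σ₂ σ₃ : Equiv.Perm (Fin 28),
      σ₁ * σ₂ * σ₃ = 1 ∧
      (∀ x y : Fin 28,
        ∃ g ∈ Subgroup.closure ({σ₁, σ₂, σ₃} : Set (Equiv.Perm (Fin 28))), g x = y) ∧
      orbitSizes σ₁ = ({7, 5, 3, 2, 2, 2, 1, 1, 1, 1, 1, 1, 1} : Multiset ℕ) ∧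
      orbitSizes σ₂ = ({6, 6, 4, 3, 3, 2, 2, 1, 1} : Multiset ℕ) ∧
      orbitSizes σ₃ = ({18, 4, 4, 2} : Multiset ℕ) := by
  refine ⟨_, _, _, BranchData28.σ₁_mul_σ₂_mul_σ₃,
    exists_mem_apply_eq_of_cycleType_eq_card BranchData28.fullCycle_mem_closure
      BranchData28.cycleType_fullCycle, ?_, ?_, ?_⟩ <;>
  rw [orbitSizes_eq_parts_partition]
  exacts [BranchData28.parts_partition_σ₁, BranchData28.parts_partition_σ₂,
    BranchData28.parts_partition_σ₃]
end

section
/- There exist permutations σ₁, σ₂, σ₃ of {1, …, 30} such that σ₁ ∘ σ₂ ∘ σ₃ = id, the subgroup generated by σ₁, σ₂, σ₃ acts transitively on {1, …, 30}, and the multisets of orbit sizes of the cyclic groups generated by σ₁, σ₂, σ₃ are, respectively, {8,4,4,4,2,2,2,1,1,1,1}, {14,5,3,2,2,2,1,1}, and {14,6,6,1,1,1,1}. -/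
/-!
The orbits of `zpowers σ` are the classes of `σ.SameCycle`, so the orbit sizes of a concrete
permutation can be read off the decidable partition of the points into these classes, and
σ₁ σ₂ σ₃ = 1 is a finite check. Transitivity holds because σ₁³ σ₂³, an element of the generated
group, is a 30-cycle.
-/

open Equiv Equiv.Perm Finset Function MulAction

namespace Equiv.Perm

variable {α : Type*}

theorem sameCycle_iff_mem_orbit_zpowers (σ : Perm α) {x y : α} :
    σ.SameCycle x y ↔ y ∈ orbit (Subgroup.zpowers σ) x := by
  simp only [SameCycle, mem_orbit_iff, Subtype.exists, Subgroup.mem_zpowers_iff,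
    exists_prop, exists_exists_eq_and, Subgroup.smul_def, Perm.smul_def]

theorem exists_mem_closure_apply_eq_of_forall_sameCycle {S : Set (Perm α)} {g : Perm α}
    (hg : g ∈ Subgroup.closure S) {x₀ : α} (hfull : ∀ y, g.SameCycle x₀ y) (x y : α) :
    ∃ τ ∈ Subgroup.closure S, τ x = y := by
  obtain ⟨i, hi⟩ := (hfull x).symm.trans (hfull y)
  exact ⟨g ^ i, zpow_mem hg i, hi⟩

variable [Fintype α] [DecidableEq α]

theorem orbitSizes_eq_map_card_sameCycle_classes (σ : Perm α) :
    orbitSizes σ = (univ.image fun x => ({y | σ.SameCycle x y} : Finset α)).val.map card := by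
  classical
  let mk : α → orbitRel.Quotient (Subgroup.zpowers σ) α := Quotient.mk''
  let cls : orbitRel.Quotient (Subgroup.zpowers σ) α → Finset α := fun q => {y | mk y = q}
  have cls_mk (x : α) : cls (mk x) = ({y | σ.SameCycle x y} : Finset α) := by
    ext y
    simp only [cls, mk, mem_filter, mem_univ, true_and, Quotient.eq'', orbitRel_apply,
      sameCycle_iff_mem_orbit_zpowers]
  have cls_injective : Injective cls := fun q q' h => by
    have : q.out ∈ cls q' := h ▸ by simp [cls, mk]
    simpa [cls, mk] using this
  have card_cls (q) : #(cls q) = Nat.card q.orbit := by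
    have : (cls q : Set α) = q.orbit := by
      ext y
      simp [cls, mk, orbitRel.Quotient.mem_orbit]
    rw [← Set.ncard_coe_finset, this, Nat.card_coe_set_eq]
  -- the instance that `orbitSizes` is defined with
  let _ := Fintype.ofFinite (orbitRel.Quotient (Subgroup.zpowers σ) α)
  calc orbitSizes σ = univ.val.map (card ∘ cls) :=
        Multiset.map_congr rfl fun q _ => (card_cls q).symm
    _ = (univ.image cls).val.map card := by
        rw [image_val_of_injOn cls_injective.injOn, Multiset.map_map]
    _ = _ := by
        rw [← image_univ_of_surjective (Quotient.mk''_surjective), image_image]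
        exact congrArg (fun f => (univ.image f).val.map card) (funext cls_mk)

end Equiv.Perm

def σ₁ : Perm (Fin 30) :=
  c[0, 20, 27, 21, 10, 7, 12, 8] * c[2, 9, 5, 23] * c[4, 19, 28, 6] * c[15, 25, 26, 22] *
    c[1, 11] * c[3, 18] * c[13, 14]

def σ₂ : Perm (Fin 30) :=
  c[0, 8, 3, 20, 17, 26, 25, 23, 5, 10, 6, 14, 16, 11] * c[4, 7, 13, 24, 9] * c[1, 21, 27] *
    c[15, 28] * c[18, 22] * c[19, 29]

def σ₃ : Perm (Fin 30) :=
  c[1, 16, 14, 7, 5, 24, 13, 6, 15, 18, 8, 12, 4, 10] * c[2, 25, 28, 29, 19, 9] *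
    c[3, 22, 17, 20, 11, 27]

set_option maxRecDepth 10000

theorem σ₁_mul_σ₂_mul_σ₃ : σ₁ * σ₂ * σ₃ = 1 := by decide

theorem sameCycle_σ₁_pow_three_mul_σ₂_pow_three :
    ∀ y : Fin 30, (σ₁ ^ 3 * σ₂ ^ 3).SameCycle 0 y := by
  decide

theorem orbitSizes_σ₁ : orbitSizes σ₁ = {8, 4, 4, 4, 2, 2, 2, 1, 1, 1, 1} := by
  rw [orbitSizes_eq_map_card_sameCycle_classes]; decide

theorem orbitSizes_σ₂ : orbitSizes σ₂ = {14, 5, 3, 2, 2, 2, 1, 1} := by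
  rw [orbitSizes_eq_map_card_sameCycle_classes]; decide

theorem orbitSizes_σ₃ : orbitSizes σ₃ = {14, 6, 6, 1, 1, 1, 1} := by
  rw [orbitSizes_eq_map_card_sameCycle_classes]; decide

/-- Realizability of the degree-30 branch-data triple
`[8, 4, 4, 4, 2, 2, 2, 1, 1, 1, 1]`, `[14, 5, 3, 2, 2, 2, 1, 1]`, `[14, 6, 6, 1, 1, 1, 1]`
by a transitive permutation triple with product the identity. -/
theorem realizable_triple_15 :
    ∃ σ₁ σ₂ σ₃ : Equiv.Perm (Fin 30),
      σ₁ * σ₂ * σ₃ = 1 ∧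
      (∀ x y : Fin 30,
        ∃ g ∈ Subgroup.closure ({σ₁, σ₂, σ₃} : Set (Equiv.Perm (Fin 30))), g x = y) ∧
      orbitSizes σ₁ = ({8, 4, 4, 4, 2, 2, 2, 1, 1, 1, 1} : Multiset ℕ) ∧
      orbitSizes σ₂ = ({14, 5, 3, 2, 2, 2, 1, 1} : Multiset ℕ) ∧
      orbitSizes σ₃ = ({14, 6, 6, 1, 1, 1, 1} : Multiset ℕ) := by
  refine ⟨σ₁, σ₂, σ₃, σ₁_mul_σ₂_mul_σ₃, ?_, orbitSizes_σ₁, orbitSizes_σ₂, orbitSizes_σ₃⟩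
  exact exists_mem_closure_apply_eq_of_forall_sameCycle
    (mul_mem (pow_mem (Subgroup.subset_closure (by simp)) 3)
      (pow_mem (Subgroup.subset_closure (by simp)) 3))
    sameCycle_σ₁_pow_three_mul_σ₂_pow_three
end

section
/- There exist permutations σ₁, σ₂, σ₃ of {1, …, 30} such that σ₁ ∘ σ₂ ∘ σ₃ = id, the subgroup generated by σ₁, σ₂, σ₃ acts transitively on {1, …, 30}, and the multisets of orbit sizes of the cyclic groups generated by σ₁, σ₂, σ₃ are, respectively, {4,4,4,4,3,3,2,2,1,1,1,1}, {5,4,4,4,3,3,2,2,2,1}, and {14,10,1,1,1,1,1,1}. -/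
/-!
The witness is written as products of disjoint cycles and checked by kernel computation. Orbit
sizes are read off from minimal periods: an orbit of `⟨σ⟩` of size `k` consists of `k` points of
minimal period `k`, and a multiset `S` of positive integers is determined by
`S.bind fun k => replicate k k`. Transitivity holds because every point is reached from `0` by a
word of length at most `6` in the three permutations.
-/

open Equiv Function MulAction

namespace Multiset

theorem count_bind_replicate_self (S : Multiset ℕ) (n : ℕ) :
    (S.bind fun k => replicate k k).count n = n * S.count n := by
  induction S using Multiset.induction_on with
  | empty => simp
  | cons k S ih =>
    rw [cons_bind, count_add, ih, count_replicate, count_cons]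
    split_ifs <;> grind

theorem eq_of_bind_replicate_self_eq {S T : Multiset ℕ} (hS : 0 ∉ S) (hT : 0 ∉ T)
    (h : (S.bind fun k => replicate k k) = T.bind fun k => replicate k k) : S = T := by
  ext n
  rcases n.eq_zero_or_pos with rfl | hn
  · rw [count_eq_zero_of_notMem hS, count_eq_zero_of_notMem hT]
  · have hcount := count_bind_replicate_self S n
    rw [h, count_bind_replicate_self] at hcount
    exact (Nat.eq_of_mul_eq_mul_left hn hcount).symm

end Multiset

theorem Function.minimalPeriod_eq_of_forall_lt {α : Type*} {f : α → α} {x : α} {n : ℕ}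
    (hn : 0 < n) (hx : IsPeriodicPt f n x) (hmin : ∀ m < n, 0 < m → ¬IsPeriodicPt f m x) :
    minimalPeriod f x = n :=
  (hx.minimalPeriod_le hn).eq_or_lt.resolve_right fun hlt =>
    hmin _ hlt (hx.minimalPeriod_pos hn) (isPeriodicPt_minimalPeriod f x)

section OrbitSizes

variable {α : Type*}

theorem card_orbit_zpowers_eq_minimalPeriod (σ : Perm α) (x : α) :
    Nat.card (orbit (Subgroup.zpowers σ) x) = minimalPeriod σ x := by
  rw [Nat.card_congr (orbitZPowersEquiv σ x), Nat.card_zmod]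
  rfl

theorem zero_notMem_orbitSizes [Finite α] (σ : Perm α) : 0 ∉ orbitSizes σ := by
  rw [orbitSizes, Multiset.mem_map]
  rintro ⟨ω, -, hω⟩
  have : Nonempty ω.orbit := (orbitRel.Quotient.nonempty_orbit ω).to_subtype
  exact Nat.card_pos.ne' hω

theorem orbitSizes_bind_replicate [Fintype α] (σ : Perm α) :
    (orbitSizes σ).bind (fun k => Multiset.replicate k k) =
      Finset.univ.val.map (minimalPeriod σ) := by
  classical
  let _ := Fintype.ofFinite (orbitRel.Quotient (Subgroup.zpowers σ) α)
  have hperiod (ω : orbitRel.Quotient (Subgroup.zpowers σ) α) {y : α} (hy : y ∈ ω.orbit) :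
      minimalPeriod σ y = Nat.card ω.orbit := by
    rw [orbitRel.Quotient.mem_orbit] at hy
    rw [← hy, orbitRel.Quotient.orbit_mk, card_orbit_zpowers_eq_minimalPeriod]
  rw [← Multiset.map_univ_val_equiv (selfEquivSigmaOrbits' (Subgroup.zpowers σ) α).symm,
    Multiset.map_map, ← Finset.univ_sigma_univ]
  simp only [orbitSizes, Finset.sigma, Multiset.sigma, Multiset.map_bind, Multiset.bind_map]
  refine Multiset.bind_congr fun ω _ => ?_
  rw [eq_comm, Multiset.map_map, Multiset.eq_replicate]
  refine ⟨by simp [Nat.card_eq_fintype_card], fun n hn => ?_⟩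
  obtain ⟨y, -, rfl⟩ := Multiset.mem_map.1 hn
  exact hperiod ω y.2

theorem orbitSizes_eq_of_periods [Fintype α] (σ : Perm α) (v : α → ℕ) {T : Multiset ℕ}
    (hv : ∀ x, 0 < v x ∧ IsPeriodicPt σ (v x) x ∧ ∀ m < v x, 0 < m → ¬IsPeriodicPt σ m x)
    (hT : 0 ∉ T) (hvT : Finset.univ.val.map v = T.bind fun k => Multiset.replicate k k) :
    orbitSizes σ = T := by
  refine Multiset.eq_of_bind_replicate_self_eq (zero_notMem_orbitSizes σ) hT ?_
  rw [orbitSizes_bind_replicate, ← hvT]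
  exact Multiset.map_congr rfl fun x _ =>
    minimalPeriod_eq_of_forall_lt (hv x).1 (hv x).2.1 (hv x).2.2

end OrbitSizes

section Transitivity

variable {α : Type*} [DecidableEq α]

def adjoinImages (S : Finset (Perm α)) (s : Finset α) : Finset α :=
  s ∪ S.biUnion fun g => s.image g

theorem exists_mem_closure_apply_eq_of_mem_iterate_adjoinImages (S : Finset (Perm α)) (x : α)
    (n : ℕ) {y : α} (hy : y ∈ (adjoinImages S)^[n] {x}) :
    ∃ g ∈ Subgroup.closure (S : Set (Perm α)), g x = y := by
  induction n generalizing y with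
  | zero => exact ⟨1, one_mem _, (Finset.mem_singleton.1 hy).symm⟩
  | succ n ih =>
    rw [iterate_succ_apply', adjoinImages, Finset.mem_union, Finset.mem_biUnion] at hy
    obtain hy | ⟨g, hg, hy⟩ := hy
    · exact ih hy
    · obtain ⟨z, hz, rfl⟩ := Finset.mem_image.1 hy
      obtain ⟨h, hh, rfl⟩ := ih hz
      exact ⟨g * h, mul_mem (Subgroup.subset_closure hg) hh, rfl⟩

theorem exists_mem_closure_apply_eq_of_iterate_adjoinImages_eq_univ [Fintype α]
    (S : Finset (Perm α)) (x₀ : α) (n : ℕ) (h : (adjoinImages S)^[n] {x₀} = Finset.univ)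
    (x y : α) : ∃ g ∈ Subgroup.closure (S : Set (Perm α)), g x = y := by
  obtain ⟨gx, hgx, rfl⟩ :=
    exists_mem_closure_apply_eq_of_mem_iterate_adjoinImages S x₀ n (h ▸ Finset.mem_univ x)
  obtain ⟨gy, hgy, rfl⟩ :=
    exists_mem_closure_apply_eq_of_mem_iterate_adjoinImages S x₀ n (h ▸ Finset.mem_univ y)
  exact ⟨gy * gx⁻¹, mul_mem hgy (inv_mem hgx), by simp⟩

end Transitivity

section Cycles

variable {α : Type*} [DecidableEq α]

def ofCycles (L : List (List α)) : Perm α := (L.map List.formPerm).prod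

/-- The length of the cycle of `L` containing `x`, or `1` if there is none. -/
def cycleLength (L : List (List α)) (x : α) : ℕ :=
  ((L.find? (·.contains x)).map List.length).getD 1

end Cycles

def cycles₁ : List (List (Fin 30)) :=
  [[0, 6, 2], [1, 20, 17], [3, 7, 5, 11], [4, 9], [8, 26, 22, 14], [12, 25, 15, 29], [16, 28],
    [18, 23, 24, 21]]

def cycles₂ : List (List (Fin 30)) :=
  [[0, 17, 12], [1, 13, 23, 20], [2, 9, 4, 27], [3, 29], [5, 7, 21, 11], [6, 15],
    [8, 14, 28, 10, 26], [16, 19], [22, 25, 24]]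

def cycles₃ : List (List (Fin 30)) :=
  [[0, 27, 4, 2, 15, 22, 10, 28, 19, 16, 14, 24, 13, 1], [3, 21, 25, 17, 23, 18, 7, 29, 6, 12]]

/-- Realizability of the degree-30 branch-data triple
`[4, 4, 4, 4, 3, 3, 2, 2, 1, 1, 1, 1]`, `[5, 4, 4, 4, 3, 3, 2, 2, 2, 1]`, `[14, 10, 1, 1, 1, 1, 1, 1]`
by a transitive permutation triple with product the identity. -/
theorem realizable_triple_16 :
    ∃ σ₁ σ₂ σ₃ : Equiv.Perm (Fin 30),
      σ₁ * σ₂ * σ₃ = 1 ∧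
      (∀ x y : Fin 30,
        ∃ g ∈ Subgroup.closure ({σ₁, σ₂, σ₃} : Set (Equiv.Perm (Fin 30))), g x = y) ∧
      orbitSizes σ₁ = ({4, 4, 4, 4, 3, 3, 2, 2, 1, 1, 1, 1} : Multiset ℕ) ∧
      orbitSizes σ₂ = ({5, 4, 4, 4, 3, 3, 2, 2, 2, 1} : Multiset ℕ) ∧
      orbitSizes σ₃ = ({14, 10, 1, 1, 1, 1, 1, 1} : Multiset ℕ) := by
  refine ⟨ofCycles cycles₁, ofCycles cycles₂, ofCycles cycles₃, by decide +kernel, ?_,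
    orbitSizes_eq_of_periods _ (cycleLength cycles₁) (by decide +kernel) (by decide)
      (by decide +kernel),
    orbitSizes_eq_of_periods _ (cycleLength cycles₂) (by decide +kernel) (by decide)
      (by decide +kernel),
    orbitSizes_eq_of_periods _ (cycleLength cycles₃) (by decide +kernel) (by decide)
      (by decide +kernel)⟩
  have hreach : (adjoinImages {ofCycles cycles₁, ofCycles cycles₂, ofCycles cycles₃})^[6] {0} =
      Finset.univ := by
    decide +kernel
  simpa using exists_mem_closure_apply_eq_of_iterate_adjoinImages_eq_univ _ 0 6 hreach
end
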